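/- Let (G,H) be a compact Friedrichs module with Gelfand triplet G ⊂ H ⊂ G*, and let A and B be closed densely defined operators in H such that ρ(A) ∩ ρ(B) ≠ ∅, D(A) is a dense subspace of G, D(A*) ⊆ G, D(B) ⊆ G, and A, B extend to continuous operators Ã, B̃ ∈ B(G,G*). Fix z ∈ ρ(A) ∩ ρ(B) and let R_z : G* → H be the unique continuous extension of (A−z)⁻¹. Assume there exist a Banach module (K, M(K)) and operators S ∈ B(K,G*) and T ∈ B₀ˡ(G,K) such that B̃ − Ã = S∘T and such that R_z∘S ∈ B(K,H) is left decay preserving (H carrying its Hilbert module structure). Then (A−z)⁻¹ − (B−z)⁻¹ is a compact operator on H, i.e. B is a compact perturbation of A. -/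

import Mathlib

open ContinuousLinearMap

noncomputable section

/-- The space of continuous antilinear forms on `G` (the "adjoint space" `G*`). -/
abbrev AntiDual (G : Type*) [NormedAddCommGroup G] [NormedSpace ℂ G] : Type _ :=
  G →SL[starRingEnd ℂ] ℂ

/-- Given a continuous embedding `e : G → H` of a normed space into a Hilbert space,
the canonical map `H → G*`, `v ↦ (u ↦ ⟪e u, v⟫)`. -/
def toAntiDual {G H : Type*} [NormedAddCommGroup G] [NormedSpace ℂ G]
    [NormedAddCommGroup H] [InnerProductSpace ℂ H] (e : G →L[ℂ] H) :
    H →L[ℂ] AntiDual G :=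
  LinearMap.mkContinuous
    { toFun := fun v => ((innerSL ℂ).flip v).comp e
      map_add' := fun v w => by ext u; simp
      map_smul' := fun c v => by ext u; simp }
    ‖e‖ (fun v => by
      have hv : ‖(innerSL ℂ).flip v‖ ≤ ‖v‖ :=
        opNorm_le_bound _ (norm_nonneg v)
          (fun u => by simpa [mul_comm] using norm_inner_le_norm (𝕜 := ℂ) u v)
      calc ‖((innerSL ℂ).flip v).comp e‖ ≤ ‖(innerSL ℂ).flip v‖ * ‖e‖ := opNorm_comp_le _ _
      _ ≤ ‖v‖ * ‖e‖ := by gcongr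
      _ = ‖e‖ * ‖v‖ := mul_comm _ _)

/-- Precomposition with `D : G →L E`, as a map `E* →L G*`; this is the adjoint `D*`. -/
def precompAntiDual {G E : Type*} [NormedAddCommGroup G] [NormedSpace ℂ G]
    [NormedAddCommGroup E] [NormedSpace ℂ E] (D : G →L[ℂ] E) :
    AntiDual E →L[ℂ] AntiDual G :=
  LinearMap.mkContinuous
    { toFun := fun w => w.comp D
      map_add' := fun w₁ w₂ => by ext u; simp
      map_smul' := fun c w => by ext u; simp }
    ‖D‖ (fun w => by
      calc ‖w.comp D‖ ≤ ‖w‖ * ‖D‖ := opNorm_comp_le _ _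
      _ = ‖D‖ * ‖w‖ := mul_comm _ _)

/-- Auxiliary: the antilinear form `u ↦ conj ⟨v, a u⟩`. -/
def adjointFormAux {E : Type*} [NormedAddCommGroup E] [NormedSpace ℂ E]
    (a : E →L[ℂ] AntiDual E) (v : E) : AntiDual E :=
  LinearMap.mkContinuous
    { toFun := fun u => starRingEnd ℂ (a u v)
      map_add' := fun u₁ u₂ => by simp
      map_smul' := fun c u => by simp }
    (‖a‖ * ‖v‖) (fun u => by
      simp only [LinearMap.coe_mk, AddHom.coe_mk]
      calc ‖starRingEnd ℂ (a u v)‖ = ‖a u v‖ := by simp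
      _ ≤ ‖a u‖ * ‖v‖ := (a u).le_opNorm v
      _ ≤ (‖a‖ * ‖u‖) * ‖v‖ := by gcongr; exact a.le_opNorm u
      _ = ‖a‖ * ‖v‖ * ‖u‖ := by ring)

theorem adjointFormAux_norm_le {E : Type*} [NormedAddCommGroup E] [NormedSpace ℂ E]
    (a : E →L[ℂ] AntiDual E) (v : E) : ‖adjointFormAux a v‖ ≤ ‖a‖ * ‖v‖ :=
  LinearMap.mkContinuous_norm_le _ (mul_nonneg (norm_nonneg a) (norm_nonneg v)) _

@[simp] theorem adjointFormAux_apply {E : Type*} [NormedAddCommGroup E] [NormedSpace ℂ E]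
    (a : E →L[ℂ] AntiDual E) (v u : E) :
    adjointFormAux a v u = starRingEnd ℂ (a u v) := rfl

/-- The adjoint form `a* ∈ B(E,E*)` of `a ∈ B(E,E*)`: `⟨u, a* v⟩ = conj ⟨v, a u⟩`. -/
def adjointForm {E : Type*} [NormedAddCommGroup E] [NormedSpace ℂ E]
    (a : E →L[ℂ] AntiDual E) : E →L[ℂ] AntiDual E :=
  LinearMap.mkContinuous
    { toFun := fun v => adjointFormAux a v
      map_add' := fun v w => by ext u; simp
      map_smul' := fun c v => by ext u; simp }
    ‖a‖ (fun v => adjointFormAux_norm_le a v)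

variable {H K : Type*}

/-- `M` is the multiplier algebra of a Banach module structure on `H`: a non-degenerate
norm-closed subalgebra of `B(H)` possessing a bounded approximate unit. -/
structure IsBanachModule (H : Type*) [NormedAddCommGroup H] [NormedSpace ℂ H]
    (M : Set (H →L[ℂ] H)) : Prop where
  zero_mem : (0 : H →L[ℂ] H) ∈ M
  add_mem : ∀ {A B : H →L[ℂ] H}, A ∈ M → B ∈ M → A + B ∈ M
  smul_mem : ∀ (c : ℂ) {A : H →L[ℂ] H}, A ∈ M → c • A ∈ M
  mul_mem : ∀ {A B : H →L[ℂ] H}, A ∈ M → B ∈ M → A.comp B ∈ M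
  isClosed : IsClosed M
  nondegenerate : Dense (↑(Submodule.span ℂ {u : H | ∃ A ∈ M, ∃ v : H, u = A v}) : Set H)
  approx_unit : ∃ C : ℝ, ∀ ε > (0 : ℝ), ∀ F : Finset (H →L[ℂ] H), ↑F ⊆ M →
    ∃ J ∈ M, ‖J‖ ≤ C ∧ ∀ A ∈ F, ‖J.comp A - A‖ ≤ ε ∧ ‖A.comp J - A‖ ≤ ε

/-- A Hilbert module: a Banach module on a Hilbert space whose multiplier algebra is a
C*-algebra of operators (i.e. is moreover closed under adjoints). -/
structure IsHilbertModule (H : Type*) [NormedAddCommGroup H] [InnerProductSpace ℂ H]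
    [CompleteSpace H] (M : Set (H →L[ℂ] H)) extends IsBanachModule H M : Prop where
  star_mem : ∀ {A : H →L[ℂ] H}, A ∈ M → ContinuousLinearMap.adjoint A ∈ M

/-- `B₀ˡ(H,K)`: the closed linear span of the operators `A ∘ T` with `A` in the multiplier
algebra of `K` and `T ∈ B(H,K)` (operators left vanishing at infinity). -/
def B0l [NormedAddCommGroup H] [NormedSpace ℂ H] [NormedAddCommGroup K] [NormedSpace ℂ K]
    (MK : Set (K →L[ℂ] K)) : Set (H →L[ℂ] K) :=
  closure (↑(Submodule.span ℂ
    {S : H →L[ℂ] K | ∃ A ∈ MK, ∃ T : H →L[ℂ] K, S = A.comp T}) : Set (H →L[ℂ] K))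

/-- `B₀ʳ(H,K)`: the closed linear span of the operators `T ∘ A` with `A` in the multiplier
algebra of `H` and `T ∈ B(H,K)` (operators right vanishing at infinity). -/
def B0r [NormedAddCommGroup H] [NormedSpace ℂ H] [NormedAddCommGroup K] [NormedSpace ℂ K]
    (MH : Set (H →L[ℂ] H)) : Set (H →L[ℂ] K) :=
  closure (↑(Submodule.span ℂ
    {S : H →L[ℂ] K | ∃ A ∈ MH, ∃ T : H →L[ℂ] K, S = T.comp A}) : Set (H →L[ℂ] K))

/-- `S ∈ B(H,K)` is left decay preserving. -/
def LeftDecayPreserving [NormedAddCommGroup H] [NormedSpace ℂ H] [NormedAddCommGroup K]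
    [NormedSpace ℂ K] (MH : Set (H →L[ℂ] H)) (MK : Set (K →L[ℂ] K))
    (S : H →L[ℂ] K) : Prop :=
  ∀ A ∈ MH, S.comp A ∈ B0l MK

/-- `S ∈ B(H,K)` is right decay preserving. -/
def RightDecayPreserving [NormedAddCommGroup H] [NormedSpace ℂ H] [NormedAddCommGroup K]
    [NormedSpace ℂ K] (MH : Set (H →L[ℂ] H)) (MK : Set (K →L[ℂ] K))
    (S : H →L[ℂ] K) : Prop :=
  ∀ A ∈ MK, A.comp S ∈ B0r MH

/-- `R` is the resolvent of the (unbounded) operator `A` at `z`. -/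
def IsResolventAt {H : Type*} [NormedAddCommGroup H] [NormedSpace ℂ H]
    (A : H →ₗ.[ℂ] H) (z : ℂ) (R : H →L[ℂ] H) : Prop :=
  (∀ v : H, ∃ h : R v ∈ A.domain, A ⟨R v, h⟩ - z • R v = v) ∧
  (∀ x : A.domain, R (A x - z • (x : H)) = (x : H))

/-!
Lifting the resolvents through `e` by the closed graph theorem gives `(A - z)⁻¹ = e P` and
`(B - z)⁻¹ = e Q` with `P, Q ∈ B(H, G)`. By density of `D(A)` in `G`, `R_z (Ã - z) = 1` on `G`,
while `(B̃ - z) Q = 1` on `H`; hence `(A - z)⁻¹ - (B - z)⁻¹ = R_z (B̃ - Ã) Q = (R_z S)(T Q)`.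
As `T Q ∈ B₀ˡ(H, K)` and `R_z S` is left decay preserving, this lies in `B₀ˡ(H, H)`.
Along a bounded approximate unit `J_i` of `M(H)`, every `Φ ∈ B₀ˡ(H, H)` is the norm limit of
`J_i Φ`; for `Φ = e (P - Q)` these are `(J_i e)(P - Q)`, compact since the module is compact.
-/

open Filter Topology

section ClosedSpan

variable {E F : Type*} [NormedAddCommGroup E] [NormedSpace ℂ E]
  [NormedAddCommGroup F] [NormedSpace ℂ F]

theorem mapsTo_closure_span (L : E →L[ℂ] F) {s : Set E} {t : Set F}
    (h : Set.MapsTo L s (closure (Submodule.span ℂ t))) :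
    Set.MapsTo L (closure (Submodule.span ℂ s)) (closure (Submodule.span ℂ t)) := by
  let N := Submodule.span ℂ t
  have hspan : Submodule.span ℂ s ≤ N.topologicalClosure.comap (L : E →ₗ[ℂ] F) :=
    Submodule.span_le.2 h
  intro x hx
  exact closure_minimal hspan (N.isClosed_topologicalClosure.preimage L.continuous) hx

end ClosedSpan

section DecayingOperators

variable {X Y K H' : Type*} [NormedAddCommGroup X] [NormedSpace ℂ X]
  [NormedAddCommGroup Y] [NormedSpace ℂ Y] [NormedAddCommGroup K] [NormedSpace ℂ K]
  [NormedAddCommGroup H'] [NormedSpace ℂ H']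

theorem B0l_comp {MK : Set (K →L[ℂ] K)} {S : X →L[ℂ] K} (hS : S ∈ B0l (H := X) MK)
    (W : Y →L[ℂ] X) : S.comp W ∈ B0l (H := Y) MK := by
  refine mapsTo_closure_span ((compL ℂ Y X K).flip W) ?_ hS
  rintro _ ⟨A, hA, T, rfl⟩
  exact subset_closure (Submodule.subset_span ⟨A, hA, T.comp W, rfl⟩)

theorem LeftDecayPreserving.comp_mem_B0l {MK : Set (K →L[ℂ] K)} {MH : Set (H' →L[ℂ] H')}
    {R : K →L[ℂ] H'} (hR : LeftDecayPreserving MK MH R) {T : X →L[ℂ] K}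
    (hT : T ∈ B0l (H := X) MK) : R.comp T ∈ B0l (H := X) MH := by
  refine mapsTo_closure_span (compL ℂ X K H' R) ?_ hT
  rintro _ ⟨A, hA, T', rfl⟩
  exact B0l_comp (hR A hA) T'

end DecayingOperators

section ApproximateUnit

variable {X H' : Type*} [NormedAddCommGroup X] [NormedSpace ℂ X]
  [NormedAddCommGroup H'] [NormedSpace ℂ H'] {M : Set (H' →L[ℂ] H')}

/-- `J (n, F)` is a `1 / (n + 1)`-approximate unit for the finite set `F`. -/
theorem IsBanachModule.exists_bounded_approxUnit (hM : IsBanachModule H' M) :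
    ∃ (C : NNReal) (J : ℕ × Finset M → H' →L[ℂ] H'), (∀ i, J i ∈ M) ∧ (∀ i, ‖J i‖ ≤ C) ∧
      ∀ A ∈ M, Tendsto (fun i => (J i).comp A) atTop (𝓝 A) := by
  obtain ⟨C, hC⟩ := hM.approx_unit
  have hunit : ∀ i : ℕ × Finset M, ∃ J ∈ M, ‖J‖ ≤ C ∧
      ∀ A ∈ i.2.map (Function.Embedding.subtype _),
        ‖J.comp A - A‖ ≤ 1 / (i.1 + 1) ∧ ‖A.comp J - A‖ ≤ 1 / (i.1 + 1) := fun i =>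
    hC _ (by positivity) _ (by simp)
  choose J hJM hJC hJ using hunit
  refine ⟨C.toNNReal, J, hJM, fun i => (hJC i).trans (Real.le_coe_toNNReal C), fun A hA => ?_⟩
  rw [Metric.tendsto_nhds]
  intro ε hε
  obtain ⟨N, hN⟩ := exists_nat_one_div_lt hε
  filter_upwards [eventually_ge_atTop (N, {⟨A, hA⟩})] with i hi
  have hAi : A ∈ i.2.map (Function.Embedding.subtype _) :=
    Finset.mem_map_of_mem _ (hi.2 (Finset.mem_singleton_self _))
  calc dist ((J i).comp A) A ≤ 1 / (i.1 + 1) := by rw [dist_eq_norm]; exact (hJ i A hAi).1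
    _ ≤ 1 / (N + 1) := by gcongr; exact_mod_cast hi.1
    _ < ε := hN

theorem tendsto_comp_of_mem_B0l {ι : Type*} {l : Filter ι} {J : ι → H' →L[ℂ] H'} {C : NNReal}
    (hJC : ∀ i, ‖J i‖ ≤ C) (hJ : ∀ A ∈ M, Tendsto (fun i => (J i).comp A) l (𝓝 A))
    {Φ : X →L[ℂ] H'} (hΦ : Φ ∈ B0l (H := X) M) : Tendsto (fun i => (J i).comp Φ) l (𝓝 Φ) := by
  have hlip : ∀ i, LipschitzWith C fun Ψ : X →L[ℂ] H' => (J i).comp Ψ := fun i =>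
    LipschitzWith.of_dist_le_mul fun Ψ Ψ' => by
      rw [dist_eq_norm, dist_eq_norm, ← comp_sub]
      exact (opNorm_comp_le _ _).trans (by gcongr; exact hJC i)
  have hclosed : IsClosed {Ψ : X →L[ℂ] H' | Tendsto (fun i => (J i).comp Ψ) l (𝓝 Ψ)} :=
    (LipschitzWith.uniformEquicontinuous _ C hlip).equicontinuous.isClosed_setOfPred_tendsto
      continuous_id
  refine closure_minimal (fun Ψ hΨ => ?_) hclosed hΦ
  rw [Set.mem_ofPred_eq]
  induction hΨ using Submodule.span_induction with
  | mem _ h =>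
    obtain ⟨A, hA, T, rfl⟩ := h
    have := ((compL ℂ X H' H').flip T).continuous.tendsto A |>.comp (hJ A hA)
    simpa only [Function.comp_def, flip_apply, compL_apply, comp_assoc] using this
  | zero => simpa only [comp_zero] using tendsto_const_nhds
  | add _ _ _ _ h₁ h₂ => simpa only [comp_add] using h₁.add h₂
  | smul c _ _ h => simpa only [comp_smul] using h.const_smul c

theorem isCompactOperator_of_mem_B0l {G : Type*} [NormedAddCommGroup G] [NormedSpace ℂ G]
    [CompleteSpace H'] (hM : IsBanachModule H' M) (e : G →L[ℂ] H')
    (hcpt : ∀ A ∈ M, IsCompactOperator (A.comp e)) {D : X →L[ℂ] G}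
    (hD : e.comp D ∈ B0l (H := X) M) : IsCompactOperator (e.comp D) := by
  classical
  obtain ⟨C, J, hJM, hJC, hJ⟩ := hM.exists_bounded_approxUnit
  refine isCompactOperator_of_tendsto (tendsto_comp_of_mem_B0l hJC hJ hD) (.of_forall fun i => ?_)
  rw [← comp_assoc]
  exact (hcpt _ (hJM i)).comp_clm D

end ApproximateUnit

theorem exists_comp_eq_of_range_subset {X G E : Type*} [NormedAddCommGroup X] [NormedSpace ℂ X]
    [CompleteSpace X] [NormedAddCommGroup G] [NormedSpace ℂ G] [CompleteSpace G]
    [NormedAddCommGroup E] [NormedSpace ℂ E] {e : G →L[ℂ] E} (he : Function.Injective e)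
    {f : X →L[ℂ] E} (hf : Set.range f ⊆ Set.range e) : ∃ P : X →L[ℂ] G, e.comp P = f := by
  let P : X →ₗ[ℂ] G := (LinearEquiv.ofInjective (e : G →ₗ[ℂ] E) he).symm.toLinearMap ∘ₗ
    (f : X →ₗ[ℂ] E).codRestrict (LinearMap.range (e : G →ₗ[ℂ] E)) fun x => hf ⟨x, rfl⟩
  have heP : ∀ x, e (P x) = f x := fun x =>
    LinearEquiv.ofInjective_symm_apply (e : G →ₗ[ℂ] E) (h := he) _
  refine ⟨⟨P, P.continuous_of_seq_closed_graph fun u x y hu hPu => he ?_⟩, ext heP⟩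
  refine tendsto_nhds_unique ?_ ((f.continuous.tendsto x).comp hu) |>.trans (heP x).symm
  simpa only [Function.comp_def, heP] using (e.continuous.tendsto y).comp hPu

namespace IsResolventAt

variable {E : Type*} [NormedAddCommGroup E] [NormedSpace ℂ E] {A : E →ₗ.[ℂ] E} {z : ℂ}
  {R : E →L[ℂ] E}

theorem mem_domain (h : IsResolventAt A z R) (v : E) : R v ∈ A.domain := (h.1 v).fst

theorem apply_sub_smul (h : IsResolventAt A z R) (v : E) :
    A ⟨R v, h.mem_domain v⟩ - z • R v = v := (h.1 v).snd

theorem range_subset {G : Type*} [NormedAddCommGroup G] [NormedSpace ℂ G] {e : G →L[ℂ] E}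
    (h : IsResolventAt A z R) (hdom : ∀ v ∈ A.domain, ∃ u : G, e u = v) :
    Set.range R ⊆ Set.range e := by
  rintro _ ⟨v, rfl⟩
  exact hdom _ (h.mem_domain v)

end IsResolventAt

section Extension

variable {G E : Type*} [NormedAddCommGroup G] [NormedSpace ℂ G]
  [NormedAddCommGroup E] [InnerProductSpace ℂ E] {e : G →L[ℂ] E} {A : E →ₗ.[ℂ] E}
  {Atil : G →L[ℂ] AntiDual G}

theorem extension_sub_smul_eq
    (hAtil : ∀ (u : G) (hv : e u ∈ A.domain), Atil u = toAntiDual e (A ⟨e u, hv⟩))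
    (z : ℂ) {u : G} (hu : e u ∈ A.domain) :
    Atil u - z • toAntiDual e (e u) = toAntiDual e (A ⟨e u, hu⟩ - z • e u) := by
  rw [hAtil u hu, map_sub, map_smul]

theorem extension_sub_smul_eq_of_isResolventAt
    (hAtil : ∀ (u : G) (hv : e u ∈ A.domain), Atil u = toAntiDual e (A ⟨e u, hv⟩))
    (z : ℂ) {R : E →L[ℂ] E} (hR : IsResolventAt A z R)
    {u : G} {v : E} (hu : e u = R v) : Atil u - z • toAntiDual e (e u) = toAntiDual e v := by
  have hmem : e u ∈ A.domain := hu ▸ hR.mem_domain v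
  have hpt : (⟨e u, hmem⟩ : A.domain) = ⟨R v, hR.mem_domain v⟩ := Subtype.ext hu
  rw [extension_sub_smul_eq hAtil z hmem, hpt, hu, hR.apply_sub_smul]

theorem extendedResolvent_apply
    (hAtil : ∀ (u : G) (hv : e u ∈ A.domain), Atil u = toAntiDual e (A ⟨e u, hv⟩))
    (z : ℂ) {R : E →L[ℂ] E} (hR : IsResolventAt A z R)
    (hdense : Dense {u : G | e u ∈ A.domain}) {Rz : AntiDual G →L[ℂ] E}
    (hRz : ∀ v : E, Rz (toAntiDual e v) = R v) (u : G) :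
    Rz (Atil u - z • toAntiDual e (e u)) = e u := by
  have hcont : Continuous fun u => Rz (Atil u - z • toAntiDual e (e u)) := by fun_prop
  refine congrFun (hcont.ext_on hdense e.continuous fun u hu => ?_) u
  dsimp only
  rw [extension_sub_smul_eq hAtil z hu, hRz, hR.2 ⟨e u, hu⟩]

end Extension

theorem resolvent_sub_resolvent_eq {G E : Type*} [NormedAddCommGroup G] [NormedSpace ℂ G]
    [NormedAddCommGroup E] [InnerProductSpace ℂ E] {e : G →L[ℂ] E} {A B : E →ₗ.[ℂ] E}
    {Atil Btil : G →L[ℂ] AntiDual G}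
    (hAtil : ∀ (u : G) (hv : e u ∈ A.domain), Atil u = toAntiDual e (A ⟨e u, hv⟩))
    (hBtil : ∀ (u : G) (hv : e u ∈ B.domain), Btil u = toAntiDual e (B ⟨e u, hv⟩))
    (hdense : Dense {u : G | e u ∈ A.domain}) {z : ℂ} {RA RB : E →L[ℂ] E}
    (hRA : IsResolventAt A z RA) (hRB : IsResolventAt B z RB) {Rz : AntiDual G →L[ℂ] E}
    (hRz : ∀ v : E, Rz (toAntiDual e v) = RA v) {Q : E →L[ℂ] G} (hQ : e.comp Q = RB) :
    RA - RB = Rz.comp ((Btil - Atil).comp Q) := by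
  ext v
  have hQv : e (Q v) = RB v := congr($hQ v)
  set ι := toAntiDual e
  calc (RA - RB) v = Rz (ι v) - e (Q v) := by rw [sub_apply, hRz, hQv]
    _ = Rz (Btil (Q v) - z • ι (e (Q v))) - Rz (Atil (Q v) - z • ι (e (Q v))) := by
      rw [extension_sub_smul_eq_of_isResolventAt hBtil z hRB hQv,
        extendedResolvent_apply hAtil z hRA hdense hRz]
    _ = Rz.comp ((Btil - Atil).comp Q) v := by
      rw [← map_sub, sub_sub_sub_cancel_right]
      rfl

theorem stmt4_general {G H : Type*} [NormedAddCommGroup G] [InnerProductSpace ℂ G] [CompleteSpace G]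
    [NormedAddCommGroup H] [InnerProductSpace ℂ H] [CompleteSpace H]
    -- `(G, H)` is a compact Friedrichs module:
    (MH : Set (H →L[ℂ] H)) (hMH : IsHilbertModule H MH)
    (e : G →L[ℂ] H) (he : Function.Injective ⇑e)
    (hcpt : ∀ A ∈ MH, IsCompactOperator (⇑(A.comp e)))
    -- `A`, `B` are closed densely defined operators in `H` satisfying assumption (AB):
    (A B : H →ₗ.[ℂ] H)
    (hAsubG : ∀ v ∈ A.domain, ∃ u : G, e u = v)
    (hAdenseG : Dense {u : G | e u ∈ A.domain})
    (hBsubG : ∀ v ∈ B.domain, ∃ u : G, e u = v)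
    -- the continuous extensions `Ã, B̃ ∈ B(G, G*)`:
    (Atil Btil : G →L[ℂ] AntiDual G)
    (hAtil : ∀ (u : G) (hv : e u ∈ A.domain), Atil u = toAntiDual e (A ⟨e u, hv⟩))
    (hBtil : ∀ (u : G) (hv : e u ∈ B.domain), Btil u = toAntiDual e (B ⟨e u, hv⟩))
    -- `z ∈ ρ(A) ∩ ρ(B)`, with resolvents `RA`, `RB`:
    (z : ℂ) (RA RB : H →L[ℂ] H)
    (hRA : IsResolventAt A z RA) (hRB : IsResolventAt B z RB)
    -- `Rz : G* → H` is the unique continuous extension of `(A − z)⁻¹`: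
    (Rz : AntiDual G →L[ℂ] H) (hRz : ∀ v : H, Rz (toAntiDual e v) = RA v)
    -- a Banach module `K` and a factorization `B̃ − Ã = S ∘ T`:
    {K : Type*} [NormedAddCommGroup K] [NormedSpace ℂ K]
    (MK : Set (K →L[ℂ] K))
    (Sop : K →L[ℂ] AntiDual G) (Top : G →L[ℂ] K)
    (hTop : Top ∈ B0l (H := G) MK)
    (hfact : Btil - Atil = Sop.comp Top)
    -- `(A − z)⁻¹ S ∈ B(K, H)` is left decay preserving:
    (hdp : LeftDecayPreserving MK MH (Rz.comp Sop)) :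
    IsCompactOperator (⇑(RA - RB)) := by
  obtain ⟨P, hP⟩ := exists_comp_eq_of_range_subset he (hRA.range_subset hAsubG)
  obtain ⟨Q, hQ⟩ := exists_comp_eq_of_range_subset he (hRB.range_subset hBsubG)
  have hdiff : RA - RB = (Rz.comp Sop).comp (Top.comp Q) := by
    rw [resolvent_sub_resolvent_eq hAtil hBtil hAdenseG hRA hRB hRz hQ, hfact]
    rfl
  have hmem : e.comp (P - Q) ∈ B0l (H := H) MH := by
    rw [comp_sub, hP, hQ, hdiff]
    exact hdp.comp_mem_B0l (B0l_comp hTop Q)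
  simpa only [comp_sub, hP, hQ] using isCompactOperator_of_mem_B0l hMH.toIsBanachModule e hcpt hmem

/-- Abstract compactness criterion in a compact Friedrichs module. -/
theorem stmt4 {G H : Type*} [NormedAddCommGroup G] [InnerProductSpace ℂ G] [CompleteSpace G]
    [NormedAddCommGroup H] [InnerProductSpace ℂ H] [CompleteSpace H]
    -- `(G, H)` is a compact Friedrichs module:
    (MH : Set (H →L[ℂ] H)) (hMH : IsHilbertModule H MH)
    (e : G →L[ℂ] H) (he : Function.Injective ⇑e) (hd : DenseRange ⇑e)
    (hcpt : ∀ A ∈ MH, IsCompactOperator (⇑(A.comp e)))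
    -- `A`, `B` are closed densely defined operators in `H` satisfying assumption (AB):
    (A B : H →ₗ.[ℂ] H)
    (hAcl : A.IsClosed) (hAdense : Dense (A.domain : Set H))
    (hBcl : B.IsClosed) (hBdense : Dense (B.domain : Set H))
    (hAsubG : ∀ v ∈ A.domain, ∃ u : G, e u = v)
    (hAdenseG : Dense {u : G | e u ∈ A.domain})
    (hAstarsubG : ∀ v ∈ A.adjoint.domain, ∃ u : G, e u = v)
    (hBsubG : ∀ v ∈ B.domain, ∃ u : G, e u = v)
    -- the continuous extensions `Ã, B̃ ∈ B(G, G*)`: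
    (Atil Btil : G →L[ℂ] AntiDual G)
    (hAtil : ∀ (u : G) (hv : e u ∈ A.domain), Atil u = toAntiDual e (A ⟨e u, hv⟩))
    (hBtil : ∀ (u : G) (hv : e u ∈ B.domain), Btil u = toAntiDual e (B ⟨e u, hv⟩))
    -- `z ∈ ρ(A) ∩ ρ(B)`, with resolvents `RA`, `RB`:
    (z : ℂ) (RA RB : H →L[ℂ] H)
    (hRA : IsResolventAt A z RA) (hRB : IsResolventAt B z RB)
    -- `Rz : G* → H` is the unique continuous extension of `(A − z)⁻¹`:
    (Rz : AntiDual G →L[ℂ] H) (hRz : ∀ v : H, Rz (toAntiDual e v) = RA v)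
    -- a Banach module `K` and a factorization `B̃ − Ã = S ∘ T`:
    {K : Type*} [NormedAddCommGroup K] [NormedSpace ℂ K] [CompleteSpace K]
    (MK : Set (K →L[ℂ] K)) (hMK : IsBanachModule K MK)
    (Sop : K →L[ℂ] AntiDual G) (Top : G →L[ℂ] K)
    (hTop : Top ∈ B0l (H := G) MK)
    (hfact : Btil - Atil = Sop.comp Top)
    -- `(A − z)⁻¹ S ∈ B(K, H)` is left decay preserving:
    (hdp : LeftDecayPreserving MK MH (Rz.comp Sop)) :
    IsCompactOperator (⇑(RA - RB)) :=
  stmt4_general MH hMH e he hcpt A B hAsubG hAdenseG hBsubG Atil Btil hAtil hBtil z RA RB hRA hRB Rz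
    hRz MK Sop Top hTop hfact hdp

end
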